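/- Local recovery of the power-law kernel as the horizon vanishes: let α ∈ (0,1), x ∈ ℝ, and let ψ : ℝ → ℝ be continuous at x (and integrable near x). Then lim_{l → 0⁺} (1−α) · l^{α−1} · ∫_{x−l}^{x} (x−s)^{−α} ψ(s) ds = ψ(x); equivalently, with the frame-invariant normalization c⁻ = (1/2) Γ(2−α) l^{α−1}, the normalized left-handed power-law average 2 c⁻ ∫_{x−l}^{x} (x−s)^{−α} ψ(s)/Γ(1−α) ds tends to ψ(x) as l → 0⁺. -/

import Mathlib

/-!
The kernel `(x - s) ^ (-α)` is nonnegative on `(x - l, x]` with total mass `l ^ (1 - α) / (1 - α)`,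
so `(1 - α) l ^ (α - 1) (x - s) ^ (-α)` is a probability density there, and the quantity is a
weighted average of `ψ` over `(x - l, x]`. Once `l` is below the modulus of continuity of `ψ`
at `x` for a tolerance `η`, that average is within `η` of `ψ x`. The Gamma-normalized form is
the same expression, since `Γ(2 - α) = (1 - α) Γ(1 - α)`.
-/

open MeasureTheory intervalIntegral Filter Topology Set

theorem integral_sub_rpow_neg {α : ℝ} (hα : α < 1) (x l : ℝ) :
    ∫ s in (x - l)..x, (x - s) ^ (-α) = l ^ (1 - α) / (1 - α) := by
  rw [integral_comp_sub_left (fun u : ℝ => u ^ (-α)), sub_self, sub_sub_cancel,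
    integral_rpow (Or.inl (by linarith)), Real.zero_rpow (by linarith)]
  ring_nf

theorem integrableOn_sub_rpow_neg {α : ℝ} (hα : α < 1) (x l : ℝ) :
    IntegrableOn (fun s => (x - s) ^ (-α)) (Ioc (x - l) x) := by
  have h : IntervalIntegrable (fun u : ℝ => u ^ (-α)) volume 0 l :=
    intervalIntegrable_rpow' (by linarith)
  simpa using (h.comp_sub_left x).symm.1

theorem abs_setIntegral_mul_sub_le {X : Type*} [MeasurableSpace X] {μ : Measure X}
    {κ f : X → ℝ} {s : Set X} {c η : ℝ} (hs : MeasurableSet s) (hκ : IntegrableOn κ s μ)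
    (hκ0 : ∀ t ∈ s, 0 ≤ κ t) (hf : AEStronglyMeasurable f (μ.restrict s))
    (hfc : ∀ t ∈ s, |f t - c| ≤ η) :
    |∫ t in s, κ t * f t ∂μ - c * ∫ t in s, κ t ∂μ| ≤ η * ∫ t in s, κ t ∂μ := by
  have hbound : ∀ᵐ t ∂μ.restrict s, ‖κ t * (f t - c)‖ ≤ κ t * η := by
    filter_upwards [ae_restrict_mem hs] with t ht
    rw [norm_mul, Real.norm_of_nonneg (hκ0 t ht), Real.norm_eq_abs]
    exact mul_le_mul_of_nonneg_left (hfc t ht) (hκ0 t ht)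
  have hdev : IntegrableOn (fun t => κ t * (f t - c)) s μ :=
    (hκ.mul_const η).mono' (hκ.aestronglyMeasurable.mul (hf.sub aestronglyMeasurable_const)) hbound
  have hsplit : ∫ t in s, κ t * f t ∂μ - c * ∫ t in s, κ t ∂μ
      = ∫ t in s, κ t * (f t - c) ∂μ := by
    have hκf : (fun t => κ t * f t) = fun t => κ t * (f t - c) + κ t * c := by
      ext t; ring
    rw [hκf, MeasureTheory.integral_add hdev (hκ.mul_const c), MeasureTheory.integral_mul_const]
    ring
  rw [hsplit, ← Real.norm_eq_abs, mul_comm η, ← MeasureTheory.integral_mul_const]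
  exact norm_integral_le_of_norm_le (hκ.mul_const η) hbound

theorem tendsto_one_sub_mul_rpow_mul_integral_sub_rpow_neg_mul {α x : ℝ} (hα : α < 1)
    {ψ : ℝ → ℝ} (hψ : ContinuousAt ψ x)
    (hmeas : ∃ ε > 0, AEStronglyMeasurable ψ (volume.restrict (Ioc (x - ε) x))) :
    Tendsto (fun l : ℝ => (1 - α) * l ^ (α - 1) * ∫ s in (x - l)..x, (x - s) ^ (-α) * ψ s)
      (𝓝[>] 0) (𝓝 (ψ x)) := by
  rw [Metric.tendsto_nhds]
  intro ε hε
  obtain ⟨δ, hδ, hclose⟩ := Metric.continuousAt_iff.mp hψ (ε / 2) (half_pos hε)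
  obtain ⟨ε₀, hε₀, hψmeas⟩ := hmeas
  filter_upwards [Ioo_mem_nhdsGT (lt_min hδ hε₀)] with l ⟨hl0, hl⟩
  have hle : x - l ≤ x := by linarith
  have hc : 0 < (1 - α) * l ^ (α - 1) := mul_pos (by linarith) (Real.rpow_pos_of_pos hl0 _)
  have hcK : (1 - α) * l ^ (α - 1) * ∫ s in Ioc (x - l) x, (x - s) ^ (-α) = 1 := by
    have hl1 : l ^ (α - 1) * l ^ (1 - α) = 1 := by
      rw [← Real.rpow_add hl0, sub_add_sub_cancel', sub_self, Real.rpow_zero]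
    rw [← integral_of_le hle, integral_sub_rpow_neg hα]
    field_simp [show (1 - α) ≠ 0 by linarith]
    linarith
  have hψclose : ∀ s ∈ Ioc (x - l) x, |ψ s - ψ x| ≤ ε / 2 := by
    rintro s ⟨hs₁, hs₂⟩
    refine (hclose ?_).le
    rw [Real.dist_eq, abs_of_nonpos (by linarith)]
    linarith [min_le_left δ ε₀]
  have hmean := abs_setIntegral_mul_sub_le measurableSet_Ioc (integrableOn_sub_rpow_neg hα x l)
    (fun s hs => Real.rpow_nonneg (sub_nonneg.mpr hs.2) _)
    (hψmeas.mono_measure (Measure.restrict_mono (Ioc_subset_Ioc_left (by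
      linarith [min_le_right δ ε₀])) le_rfl)) hψclose
  rw [Real.dist_eq, integral_of_le hle]
  calc |(1 - α) * l ^ (α - 1) * (∫ s in Ioc (x - l) x, (x - s) ^ (-α) * ψ s) - ψ x|
      = (1 - α) * l ^ (α - 1) * |(∫ s in Ioc (x - l) x, (x - s) ^ (-α) * ψ s)
          - ψ x * ∫ s in Ioc (x - l) x, (x - s) ^ (-α)| := by
        rw [← abs_of_pos hc, ← abs_mul, abs_of_pos hc, mul_sub, mul_left_comm, hcK, mul_one]
    _ ≤ (1 - α) * l ^ (α - 1) * (ε / 2 * ∫ s in Ioc (x - l) x, (x - s) ^ (-α)) :=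
        mul_le_mul_of_nonneg_left hmean hc.le
    _ < ε := by rw [mul_left_comm, hcK]; linarith

theorem two_mul_half_Gamma_two_sub_mul_div_Gamma_one_sub {α : ℝ} (hα : α < 1) (L I : ℝ) :
    2 * ((1 / 2) * Real.Gamma (2 - α) * L) * (I / Real.Gamma (1 - α)) = (1 - α) * L * I := by
  have hΓ : Real.Gamma (2 - α) = (1 - α) * Real.Gamma (1 - α) := by
    rw [show (2 : ℝ) - α = (1 - α) + 1 by ring, Real.Gamma_add_one (by linarith)]
  have hΓpos : 0 < Real.Gamma (1 - α) := Real.Gamma_pos_of_pos (by linarith)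
  rw [hΓ]
  field_simp

/-- local recovery of the power-law kernel as the horizon vanishes:
for `ψ` continuous at `x` and integrable near `x`,
`(1−α) l^{α−1} ∫_{x−l}^{x} (x−s)^{−α} ψ(s) ds → ψ(x)` as `l → 0⁺`; equivalently, with
the frame-invariant multiplier `c⁻ = (1/2) Γ(2−α) l^{α−1}`, the normalized left-handed
power-law average `2 c⁻ ∫_{x−l}^{x} (x−s)^{−α} ψ(s)/Γ(1−α) ds` tends to `ψ(x)`. -/
theorem stmt_15 (α x : ℝ) (hα : α ∈ Set.Ioo (0 : ℝ) 1) (ψ : ℝ → ℝ)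
    (hψ : ContinuousAt ψ x) (hint : ∃ ε > 0, IntegrableOn ψ (Set.Ioc (x - ε) x)) :
    Tendsto
      (fun l : ℝ => (1 - α) * l ^ (α - 1) * ∫ s in (x - l)..x, (x - s) ^ (-α) * ψ s)
      (𝓝[>] 0) (𝓝 (ψ x)) ∧
    Tendsto
      (fun l : ℝ => 2 * ((1 / 2) * Real.Gamma (2 - α) * l ^ (α - 1)) *
        ∫ s in (x - l)..x, (x - s) ^ (-α) * ψ s / Real.Gamma (1 - α))
      (𝓝[>] 0) (𝓝 (ψ x)) := by
  have hlim := tendsto_one_sub_mul_rpow_mul_integral_sub_rpow_neg_mul hα.2 hψ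
    (hint.imp fun _ ⟨hε, hψ⟩ => ⟨hε, hψ.aestronglyMeasurable⟩)
  refine ⟨hlim, hlim.congr fun l => ?_⟩
  rw [intervalIntegral.integral_div, two_mul_half_Gamma_two_sub_mul_div_Gamma_one_sub hα.2]
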